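/- arXiv:1209.2179 — 8 statements merged into one kernel-verified Lean document; each statement's English description precedes it below -/
import Mathlib

section
/- Let g11, g12, g21, g22 > 0 be channel gains and P1, P2 > 0 power budgets. Suppose (R1, R2) lies on the rate region frontier, i.e., (R1, R2) is achievable by some feasible power allocation and no feasible allocation achieves user-1 rate equal to R1 together with user-2 rate strictly greater than R2. If (2^R1 - 1)(2^R2 - 1) ≤ 1, then (R1, R2) is achieved by a feasible power allocation (P11, P21, P12, P22) satisfying P11 + P21 = P1 and P12 + P22 = P2 (both base stations transmit at full power). -/
/-!
Take any allocation achieving `(R1, R2)` and give the unused budget of each base station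
to the two users in the ratio `s : 1`, where `s` is user 1's SINR. User 1's signal and
interference-plus-noise then grow by `s Δ` and `Δ`, so by the mediant identity its SINR, hence
its rate, stays `s`. User 2's signal grows by some `Δ'` and its interference by `s Δ'`, which
cannot lower its SINR `t` exactly when `s t ≤ 1`, i.e. `(2 ^ R1 - 1) (2 ^ R2 - 1) ≤ 1`. By the
frontier property user 2's rate cannot rise either, so the full-power allocation achieves
`(R1, R2)`.
-/

/-- User-1 rate of a power allocation. -/
noncomputable def rate1 (g11 g12 P11 P21 P12 P22 : ℝ) : ℝ :=
  Real.logb 2 (1 + (g11 * P11 + g12 * P12) / (1 + g11 * P21 + g12 * P22))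

/-- User-2 rate of a power allocation. -/
noncomputable def rate2 (g21 g22 P11 P21 P12 P22 : ℝ) : ℝ :=
  Real.logb 2 (1 + (g21 * P21 + g22 * P22) / (1 + g21 * P11 + g22 * P12))

/-- Feasibility of a power allocation under per-BTS power budgets. -/
def feasible (P1 P2 P11 P21 P12 P22 : ℝ) : Prop :=
  0 ≤ P11 ∧ 0 ≤ P21 ∧ 0 ≤ P12 ∧ 0 ≤ P22 ∧ P11 + P21 ≤ P1 ∧ P12 + P22 ≤ P2

open Real

noncomputable def sinr1 (g11 g12 P11 P21 P12 P22 : ℝ) : ℝ :=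
  (g11 * P11 + g12 * P12) / (1 + g11 * P21 + g12 * P22)

noncomputable def sinr2 (g21 g22 P11 P21 P12 P22 : ℝ) : ℝ :=
  (g21 * P21 + g22 * P22) / (1 + g21 * P11 + g22 * P12)

theorem mediant_eq_of_eq_mul {N D Δ x : ℝ} (hx : N = x * D) (h : D + Δ ≠ 0) :
    (N + x * Δ) / (D + Δ) = x := by
  rw [div_eq_iff h, hx]
  ring

theorem div_le_mediant {N D Δ t : ℝ} (hD : 0 < D) (hD' : 0 < D + t * Δ) (hΔ : 0 ≤ Δ)
    (h : t * (N / D) ≤ 1) : N / D ≤ (N + Δ) / (D + t * Δ) := by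
  have htN : t * N ≤ D := by rwa [mul_div_assoc', div_le_one hD] at h
  rw [div_le_div_iff₀ hD hD']
  nlinarith [mul_le_mul_of_nonneg_right htN hΔ]

section Allocation

variable {g11 g12 g21 g22 P1 P2 P11 P21 P12 P22 : ℝ}

theorem rate1_eq_logb_sinr1 :
    rate1 g11 g12 P11 P21 P12 P22 = logb 2 (1 + sinr1 g11 g12 P11 P21 P12 P22) := rfl

theorem rate2_eq_logb_sinr2 :
    rate2 g21 g22 P11 P21 P12 P22 = logb 2 (1 + sinr2 g21 g22 P11 P21 P12 P22) := rfl

theorem sinr1_nonneg (hg11 : 0 ≤ g11) (hg12 : 0 ≤ g12)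
    (hfeas : feasible P1 P2 P11 P21 P12 P22) : 0 ≤ sinr1 g11 g12 P11 P21 P12 P22 := by
  obtain ⟨h11, h21, h12, h22, -, -⟩ := hfeas
  unfold sinr1
  positivity

theorem sinr2_nonneg (hg21 : 0 ≤ g21) (hg22 : 0 ≤ g22)
    (hfeas : feasible P1 P2 P11 P21 P12 P22) : 0 ≤ sinr2 g21 g22 P11 P21 P12 P22 := by
  obtain ⟨h11, h21, h12, h22, -, -⟩ := hfeas
  unfold sinr2
  positivity

theorem two_rpow_rate1 (h : 0 ≤ sinr1 g11 g12 P11 P21 P12 P22) :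
    (2 : ℝ) ^ rate1 g11 g12 P11 P21 P12 P22 = 1 + sinr1 g11 g12 P11 P21 P12 P22 :=
  rpow_logb (by norm_num) (by norm_num) (lt_add_of_pos_of_le one_pos h)

theorem two_rpow_rate2 (h : 0 ≤ sinr2 g21 g22 P11 P21 P12 P22) :
    (2 : ℝ) ^ rate2 g21 g22 P11 P21 P12 P22 = 1 + sinr2 g21 g22 P11 P21 P12 P22 :=
  rpow_logb (by norm_num) (by norm_num) (lt_add_of_pos_of_le one_pos h)

variable {s η1 η2 : ℝ}

theorem sinr1_add_of_sinr1_eq (hg11 : 0 ≤ g11) (hg12 : 0 ≤ g12) (hP21 : 0 ≤ P21)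
    (hP22 : 0 ≤ P22) (hη1 : 0 ≤ η1) (hη2 : 0 ≤ η2) (hs : sinr1 g11 g12 P11 P21 P12 P22 = s) :
    sinr1 g11 g12 (P11 + s * η1) (P21 + η1) (P12 + s * η2) (P22 + η2) = s := by
  have hD : 0 < 1 + g11 * P21 + g12 * P22 := by positivity
  have hN : g11 * P11 + g12 * P12 = s * (1 + g11 * P21 + g12 * P22) :=
    (div_eq_iff hD.ne').mp hs
  calc sinr1 g11 g12 (P11 + s * η1) (P21 + η1) (P12 + s * η2) (P22 + η2)
      = (g11 * P11 + g12 * P12 + s * (g11 * η1 + g12 * η2)) /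
          (1 + g11 * P21 + g12 * P22 + (g11 * η1 + g12 * η2)) := by
        unfold sinr1; congr 1 <;> ring
    _ = s := mediant_eq_of_eq_mul hN (by positivity)

theorem sinr2_le_sinr2_add (hg21 : 0 ≤ g21) (hg22 : 0 ≤ g22) (hP11 : 0 ≤ P11)
    (hP12 : 0 ≤ P12) (hs : 0 ≤ s) (hη1 : 0 ≤ η1) (hη2 : 0 ≤ η2)
    (hprod : s * sinr2 g21 g22 P11 P21 P12 P22 ≤ 1) :
    sinr2 g21 g22 P11 P21 P12 P22 ≤
      sinr2 g21 g22 (P11 + s * η1) (P21 + η1) (P12 + s * η2) (P22 + η2) := by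
  calc sinr2 g21 g22 P11 P21 P12 P22
      ≤ (g21 * P21 + g22 * P22 + (g21 * η1 + g22 * η2)) /
          (1 + g21 * P11 + g22 * P12 + s * (g21 * η1 + g22 * η2)) :=
        div_le_mediant (by positivity) (by positivity) (by positivity) hprod
    _ = sinr2 g21 g22 (P11 + s * η1) (P21 + η1) (P12 + s * η2) (P22 + η2) := by
        unfold sinr2; congr 1 <;> ring

theorem exists_full_power_sinr1_eq_sinr2_ge (hg11 : 0 ≤ g11) (hg12 : 0 ≤ g12)
    (hg21 : 0 ≤ g21) (hg22 : 0 ≤ g22) (hfeas : feasible P1 P2 P11 P21 P12 P22)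
    (hprod : sinr1 g11 g12 P11 P21 P12 P22 * sinr2 g21 g22 P11 P21 P12 P22 ≤ 1) :
    ∃ Q11 Q21 Q12 Q22, feasible P1 P2 Q11 Q21 Q12 Q22 ∧ Q11 + Q21 = P1 ∧ Q12 + Q22 = P2 ∧
      sinr1 g11 g12 Q11 Q21 Q12 Q22 = sinr1 g11 g12 P11 P21 P12 P22 ∧
      sinr2 g21 g22 P11 P21 P12 P22 ≤ sinr2 g21 g22 Q11 Q21 Q12 Q22 := by
  set s := sinr1 g11 g12 P11 P21 P12 P22 with hs
  have hs0 : 0 ≤ s := sinr1_nonneg hg11 hg12 hfeas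
  obtain ⟨h11, h21, h12, h22, hsum1, hsum2⟩ := hfeas
  set η1 := (P1 - (P11 + P21)) / (1 + s)
  set η2 := (P2 - (P12 + P22)) / (1 + s)
  have hη1 : 0 ≤ η1 := div_nonneg (by linarith) (by linarith)
  have hη2 : 0 ≤ η2 := div_nonneg (by linarith) (by linarith)
  have hfull1 : P11 + s * η1 + (P21 + η1) = P1 := by
    have : (1 + s) * η1 = P1 - (P11 + P21) := mul_div_cancel₀ _ (by positivity)
    linarith
  have hfull2 : P12 + s * η2 + (P22 + η2) = P2 := by
    have : (1 + s) * η2 = P2 - (P12 + P22) := mul_div_cancel₀ _ (by positivity)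
    linarith
  refine ⟨P11 + s * η1, P21 + η1, P12 + s * η2, P22 + η2,
    ⟨by positivity, by positivity, by positivity, by positivity, hfull1.le, hfull2.le⟩,
    hfull1, hfull2, sinr1_add_of_sinr1_eq hg11 hg12 h21 h22 hη1 hη2 hs.symm,
    sinr2_le_sinr2_add hg21 hg22 h11 h12 hs0 hη1 hη2 hprod⟩

end Allocation

theorem frontier_full_power_general
    (g11 g12 g21 g22 P1 P2 R1 R2 : ℝ)
    (hg11 : 0 < g11) (hg12 : 0 < g12) (hg21 : 0 < g21) (hg22 : 0 < g22)
    (hach : ∃ P11 P21 P12 P22, feasible P1 P2 P11 P21 P12 P22 ∧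
      rate1 g11 g12 P11 P21 P12 P22 = R1 ∧ rate2 g21 g22 P11 P21 P12 P22 = R2)
    (hfront : ∀ P11 P21 P12 P22, feasible P1 P2 P11 P21 P12 P22 →
      rate1 g11 g12 P11 P21 P12 P22 = R1 → rate2 g21 g22 P11 P21 P12 P22 ≤ R2)
    (hcond : ((2 : ℝ) ^ R1 - 1) * ((2 : ℝ) ^ R2 - 1) ≤ 1) :
    ∃ P11 P21 P12 P22, feasible P1 P2 P11 P21 P12 P22 ∧
      rate1 g11 g12 P11 P21 P12 P22 = R1 ∧ rate2 g21 g22 P11 P21 P12 P22 = R2 ∧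
      P11 + P21 = P1 ∧ P12 + P22 = P2 := by
  obtain ⟨P11, P21, P12, P22, hfeas, rfl, rfl⟩ := hach
  have hs1 := sinr1_nonneg hg11.le hg12.le hfeas
  have hs2 := sinr2_nonneg hg21.le hg22.le hfeas
  rw [two_rpow_rate1 hs1, two_rpow_rate2 hs2, add_sub_cancel_left, add_sub_cancel_left]
    at hcond
  obtain ⟨Q11, Q21, Q12, Q22, hQ, hfull1, hfull2, hsinr1, hsinr2⟩ :=
    exists_full_power_sinr1_eq_sinr2_ge hg11.le hg12.le hg21.le hg22.le hfeas hcond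
  have hrate1 : rate1 g11 g12 Q11 Q21 Q12 Q22 = rate1 g11 g12 P11 P21 P12 P22 := by
    rw [rate1_eq_logb_sinr1, hsinr1, rate1_eq_logb_sinr1]
  have hrate2 : rate2 g21 g22 P11 P21 P12 P22 ≤ rate2 g21 g22 Q11 Q21 Q12 Q22 :=
    logb_le_logb_of_le (by norm_num) (lt_add_of_pos_of_le one_pos hs2)
      (add_le_add_right hsinr2 1)
  exact ⟨Q11, Q21, Q12, Q22, hQ, hrate1, le_antisymm (hfront _ _ _ _ hQ hrate1) hrate2,
    hfull1, hfull2⟩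

theorem frontier_full_power
    (g11 g12 g21 g22 P1 P2 R1 R2 : ℝ)
    (hg11 : 0 < g11) (hg12 : 0 < g12) (hg21 : 0 < g21) (hg22 : 0 < g22)
    (hP1 : 0 < P1) (hP2 : 0 < P2)
    (hach : ∃ P11 P21 P12 P22, feasible P1 P2 P11 P21 P12 P22 ∧
      rate1 g11 g12 P11 P21 P12 P22 = R1 ∧ rate2 g21 g22 P11 P21 P12 P22 = R2)
    (hfront : ∀ P11 P21 P12 P22, feasible P1 P2 P11 P21 P12 P22 →
      rate1 g11 g12 P11 P21 P12 P22 = R1 → rate2 g21 g22 P11 P21 P12 P22 ≤ R2)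
    (hcond : ((2 : ℝ) ^ R1 - 1) * ((2 : ℝ) ^ R2 - 1) ≤ 1) :
    ∃ P11 P21 P12 P22, feasible P1 P2 P11 P21 P12 P22 ∧
      rate1 g11 g12 P11 P21 P12 P22 = R1 ∧ rate2 g21 g22 P11 P21 P12 P22 = R2 ∧
      P11 + P21 = P1 ∧ P12 + P22 = P2 :=
  frontier_full_power_general g11 g12 g21 g22 P1 P2 R1 R2 hg11 hg12 hg21 hg22 hach hfront hcond
end

section
/- Let g11, g12, g21, g22 > 0 and P1, P2 > 0. The maximum over all feasible power allocations of the sum rate R1 + R2 is attained at one of the following four corner allocations (P11, P21, P12, P22): (P1, 0, P2, 0), (0, P1, 0, P2), (0, P1, P2, 0), or (P1, 0, 0, P2). -/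
open Set

theorem min_endpoints_le_mul_split {a b c e U y : ℝ} (ha : 0 ≤ a) (hb : 0 ≤ b)
    (hy : y ∈ Icc 0 U) :
    min (c * (e + b * U)) ((c + a * U) * e) ≤ (c + a * y) * (e + b * (U - y)) := by
  obtain ⟨hy0, hyU⟩ := hy
  rcases hy0.eq_or_lt with rfl | hy0
  · simp
  have hUy : 0 ≤ U - y := sub_nonneg.2 hyU
  have hU : 0 < U := hy0.trans_le hyU
  have hconcave : U * ((c + a * y) * (e + b * (U - y))) =
      (U - y) * (c * (e + b * U)) + y * ((c + a * U) * e) + a * b * U * y * (U - y) := by ring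
  refine le_of_mul_le_mul_left ?_ hU
  calc U * min (c * (e + b * U)) ((c + a * U) * e)
      = (U - y) * min (c * (e + b * U)) ((c + a * U) * e) +
          y * min (c * (e + b * U)) ((c + a * U) * e) := by ring
    _ ≤ (U - y) * (c * (e + b * U)) + y * ((c + a * U) * e) := by
      gcongr
      exacts [min_le_left _ _, min_le_right _ _]
    _ ≤ U * ((c + a * y) * (e + b * (U - y))) := by
      rw [hconcave]
      exact le_add_of_nonneg_right (by positivity)

theorem le_max_endpoints_of_eq_div_mul_split {h : ℝ → ℝ} {N a b c e U y : ℝ}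
    (hh : ∀ t, h t = N / ((c + a * t) * (e + b * (U - t)))) (hN : 0 ≤ N)
    (ha : 0 ≤ a) (hb : 0 ≤ b) (hc : 0 < c) (he : 0 < e) (hy : y ∈ Icc 0 U) :
    h y ≤ max (h 0) (h U) := by
  have hU : 0 ≤ U := hy.1.trans hy.2
  have h0 : h 0 = N / (c * (e + b * U)) := by simp [hh]
  have hU' : h U = N / ((c + a * U) * e) := by simp [hh]
  rw [hh, h0, hU']
  rcases min_le_iff.mp (min_endpoints_le_mul_split ha hb hy) with hle | hle
  · exact le_max_of_le_left (div_le_div_of_nonneg_left hN (by positivity) hle)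
  · exact le_max_of_le_right (div_le_div_of_nonneg_left hN (by positivity) hle)

theorem le_max_endpoints_of_eq_mul_div_affine {g : ℝ → ℝ} {p q r a b c M x : ℝ}
    (hg : ∀ t, g t = (p + a * t) * (q + b * t) / (r + c * t))
    (hab : 0 ≤ a * b) (hc : 0 ≤ c) (hr : 0 < r) (hx : x ∈ Icc 0 M) :
    g x ≤ max (g 0) (g M) := by
  obtain ⟨hx0, hxM⟩ := hx
  have hM : 0 ≤ M := hx0.trans hxM
  have hMx : 0 ≤ M - x := sub_nonneg.2 hxM
  have hLx : 0 < r + c * x := by positivity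
  have hLM : 0 < r + c * M := by positivity
  -- `g` is nondecreasing on `[0, M]` when `δ ≥ 0`, and convex there when `δ < 0`.
  set δ := (p * b + q * a) * r - p * q * c
  rcases le_or_gt 0 δ with hδ | hδ
  · have hmono : g M - g x =
        (M - x) * (δ + a * b * (r * (M + x) + c * M * x)) / ((r + c * M) * (r + c * x)) := by
      rw [hg, hg]; field_simp; ring
    exact le_max_of_le_right (sub_nonneg.1 (hmono ▸ by positivity))
  · rcases hx0.eq_or_lt with rfl | hx0
    · exact le_max_left _ _
    have hconvex : (M - x) * g 0 + x * g M - M * g x =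
        (a * b * r ^ 2 + c * -δ) * x * M * (M - x) / (r * (r + c * M) * (r + c * x)) := by
      rw [hg, hg, hg]; field_simp; ring
    have hnδ : 0 ≤ -δ := by linarith
    refine le_of_mul_le_mul_left ?_ (hx0.trans_le hxM)
    calc M * g x ≤ (M - x) * g 0 + x * g M := sub_nonneg.1 (hconvex ▸ by positivity)
      _ ≤ (M - x) * max (g 0) (g M) + x * max (g 0) (g M) := by
        gcongr
        exacts [le_max_left _ _, le_max_right _ _]
      _ = M * max (g 0) (g M) := by ring

noncomputable def twoPowSumRate (g11 g12 g21 g22 : ℝ) : ℝ × ℝ × ℝ × ℝ → ℝ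
  | (P11, P21, P12, P22) =>
    (1 + g11 * (P11 + P21) + g12 * (P12 + P22)) * (1 + g21 * (P11 + P21) + g22 * (P12 + P22)) /
      ((1 + g11 * P21 + g12 * P22) * (1 + g21 * P11 + g22 * P12))

section

variable {g11 g12 g21 g22 : ℝ}

local notation "F" => twoPowSumRate g11 g12 g21 g22

theorem rate1_add_rate2 (hg11 : 0 ≤ g11) (hg12 : 0 ≤ g12) (hg21 : 0 ≤ g21) (hg22 : 0 ≤ g22)
    {P11 P21 P12 P22 : ℝ} (h11 : 0 ≤ P11) (h21 : 0 ≤ P21) (h12 : 0 ≤ P12) (h22 : 0 ≤ P22) :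
    rate1 g11 g12 P11 P21 P12 P22 + rate2 g21 g22 P11 P21 P12 P22 =
      Real.logb 2 (F (P11, P21, P12, P22)) := by
  have hC : 0 < 1 + g11 * P21 + g12 * P22 := by positivity
  have hE : 0 < 1 + g21 * P11 + g22 * P12 := by positivity
  rw [rate1, rate2, ← Real.logb_mul (by positivity) (by positivity), twoPowSumRate]
  congr 1
  field_simp
  ring

theorem twoPowSumRate_pos (hg11 : 0 ≤ g11) (hg12 : 0 ≤ g12) (hg21 : 0 ≤ g21) (hg22 : 0 ≤ g22)
    {P11 P21 P12 P22 : ℝ} (h11 : 0 ≤ P11) (h21 : 0 ≤ P21) (h12 : 0 ≤ P12) (h22 : 0 ≤ P22) :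
    0 < F (P11, P21, P12, P22) := by
  rw [twoPowSumRate]; positivity

theorem twoPowSumRate_le_max_concentrate_bts1 (hg11 : 0 ≤ g11) (hg12 : 0 ≤ g12) (hg21 : 0 ≤ g21)
    (hg22 : 0 ≤ g22) {x1 y1 x2 y2 : ℝ} (hx1 : 0 ≤ x1) (hy1 : 0 ≤ y1) (hx2 : 0 ≤ x2) (hy2 : 0 ≤ y2) :
    F (x1, y1, x2, y2) ≤ max (F (x1 + y1, 0, x2, y2)) (F (0, x1 + y1, x2, y2)) := by
  have := le_max_endpoints_of_eq_div_mul_split (h := fun t => F (x1 + y1 - t, t, x2, y2))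
    (fun t => by rw [twoPowSumRate, sub_add_cancel]; congr 1; ring) (by positivity) hg11 hg21
    (by positivity : 0 < 1 + g12 * y2) (by positivity : 0 < 1 + g22 * x2)
    (show y1 ∈ Icc 0 (x1 + y1) from ⟨hy1, by linarith⟩)
  simpa only [sub_zero, sub_self, add_sub_cancel_right] using this

theorem twoPowSumRate_le_max_concentrate_bts2 (hg11 : 0 ≤ g11) (hg12 : 0 ≤ g12) (hg21 : 0 ≤ g21)
    (hg22 : 0 ≤ g22) {x1 y1 x2 y2 : ℝ} (hx1 : 0 ≤ x1) (hy1 : 0 ≤ y1) (hx2 : 0 ≤ x2) (hy2 : 0 ≤ y2) :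
    F (x1, y1, x2, y2) ≤ max (F (x1, y1, x2 + y2, 0)) (F (x1, y1, 0, x2 + y2)) := by
  have := le_max_endpoints_of_eq_div_mul_split (h := fun t => F (x1, y1, x2 + y2 - t, t))
    (fun t => by rw [twoPowSumRate, sub_add_cancel]) (by positivity) hg12 hg22
    (by positivity : 0 < 1 + g11 * y1) (by positivity : 0 < 1 + g21 * x1)
    (show y2 ∈ Icc 0 (x2 + y2) from ⟨hy2, by linarith⟩)
  simpa only [sub_zero, sub_self, add_sub_cancel_right] using this

theorem twoPowSumRate_le_max_P11 (hg11 : 0 ≤ g11) (hg12 : 0 ≤ g12) (hg21 : 0 ≤ g21)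
    (hg22 : 0 ≤ g22) {x M y1 x2 y2 : ℝ} (hx : x ∈ Icc 0 M) (hy1 : 0 ≤ y1) (hx2 : 0 ≤ x2)
    (hy2 : 0 ≤ y2) :
    F (x, y1, x2, y2) ≤ max (F (0, y1, x2, y2)) (F (M, y1, x2, y2)) :=
  le_max_endpoints_of_eq_mul_div_affine (g := fun t => F (t, y1, x2, y2))
    (p := 1 + g11 * y1 + g12 * (x2 + y2)) (q := 1 + g21 * y1 + g22 * (x2 + y2))
    (a := g11) (b := g21)
    (r := (1 + g11 * y1 + g12 * y2) * (1 + g22 * x2)) (c := (1 + g11 * y1 + g12 * y2) * g21)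
    (fun t => by rw [twoPowSumRate]; congr 1 <;> ring) (by positivity) (by positivity)
    (by positivity) hx

theorem twoPowSumRate_le_max_P21 (hg11 : 0 ≤ g11) (hg12 : 0 ≤ g12) (hg21 : 0 ≤ g21)
    (hg22 : 0 ≤ g22) {x1 y M x2 y2 : ℝ} (hy : y ∈ Icc 0 M) (hx1 : 0 ≤ x1) (hx2 : 0 ≤ x2)
    (hy2 : 0 ≤ y2) :
    F (x1, y, x2, y2) ≤ max (F (x1, 0, x2, y2)) (F (x1, M, x2, y2)) :=
  le_max_endpoints_of_eq_mul_div_affine (g := fun t => F (x1, t, x2, y2))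
    (p := 1 + g11 * x1 + g12 * (x2 + y2)) (q := 1 + g21 * x1 + g22 * (x2 + y2))
    (a := g11) (b := g21)
    (r := (1 + g12 * y2) * (1 + g21 * x1 + g22 * x2)) (c := g11 * (1 + g21 * x1 + g22 * x2))
    (fun t => by rw [twoPowSumRate]; congr 1 <;> ring) (by positivity) (by positivity)
    (by positivity) hy

theorem twoPowSumRate_le_max_P12 (hg11 : 0 ≤ g11) (hg12 : 0 ≤ g12) (hg21 : 0 ≤ g21)
    (hg22 : 0 ≤ g22) {x1 y1 x M y2 : ℝ} (hx : x ∈ Icc 0 M) (hx1 : 0 ≤ x1) (hy1 : 0 ≤ y1)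
    (hy2 : 0 ≤ y2) :
    F (x1, y1, x, y2) ≤ max (F (x1, y1, 0, y2)) (F (x1, y1, M, y2)) :=
  le_max_endpoints_of_eq_mul_div_affine (g := fun t => F (x1, y1, t, y2))
    (p := 1 + g11 * (x1 + y1) + g12 * y2) (q := 1 + g21 * (x1 + y1) + g22 * y2)
    (a := g12) (b := g22)
    (r := (1 + g11 * y1 + g12 * y2) * (1 + g21 * x1)) (c := (1 + g11 * y1 + g12 * y2) * g22)
    (fun t => by rw [twoPowSumRate]; congr 1 <;> ring) (by positivity) (by positivity)
    (by positivity) hx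

theorem twoPowSumRate_le_max_P22 (hg11 : 0 ≤ g11) (hg12 : 0 ≤ g12) (hg21 : 0 ≤ g21)
    (hg22 : 0 ≤ g22) {x1 y1 x2 y M : ℝ} (hy : y ∈ Icc 0 M) (hx1 : 0 ≤ x1) (hy1 : 0 ≤ y1)
    (hx2 : 0 ≤ x2) :
    F (x1, y1, x2, y) ≤ max (F (x1, y1, x2, 0)) (F (x1, y1, x2, M)) :=
  le_max_endpoints_of_eq_mul_div_affine (g := fun t => F (x1, y1, x2, t))
    (p := 1 + g11 * (x1 + y1) + g12 * x2) (q := 1 + g21 * (x1 + y1) + g22 * x2)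
    (a := g12) (b := g22)
    (r := (1 + g11 * y1) * (1 + g21 * x1 + g22 * x2)) (c := g12 * (1 + g21 * x1 + g22 * x2))
    (fun t => by rw [twoPowSumRate]; congr 1 <;> ring) (by positivity) (by positivity)
    (by positivity) hy

theorem twoPowSumRate_only_user1 (hg21 : 0 ≤ g21) (hg22 : 0 ≤ g22) {s t : ℝ} (hs : 0 ≤ s)
    (ht : 0 ≤ t) : F (s, 0, t, 0) = 1 + g11 * s + g12 * t := by
  have : 0 < 1 + g21 * s + g22 * t := by positivity
  rw [twoPowSumRate]
  field_simp
  ring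

theorem twoPowSumRate_only_user2 (hg11 : 0 ≤ g11) (hg12 : 0 ≤ g12) {s t : ℝ} (hs : 0 ≤ s)
    (ht : 0 ≤ t) : F (0, s, 0, t) = 1 + g21 * s + g22 * t := by
  have : 0 < 1 + g11 * s + g12 * t := by positivity
  rw [twoPowSumRate]
  field_simp
  ring

theorem twoPowSumRate_only_user1_le (hg11 : 0 ≤ g11) (hg12 : 0 ≤ g12) (hg21 : 0 ≤ g21)
    (hg22 : 0 ≤ g22) {s t P1 P2 : ℝ} (hs : s ∈ Icc 0 P1) (ht : t ∈ Icc 0 P2) :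
    F (s, 0, t, 0) ≤ F (P1, 0, P2, 0) := by
  rw [twoPowSumRate_only_user1 hg21 hg22 hs.1 ht.1,
    twoPowSumRate_only_user1 hg21 hg22 (hs.1.trans hs.2) (ht.1.trans ht.2)]
  gcongr
  exacts [hs.2, ht.2]

theorem twoPowSumRate_only_user2_le (hg11 : 0 ≤ g11) (hg12 : 0 ≤ g12) (hg21 : 0 ≤ g21)
    (hg22 : 0 ≤ g22) {s t P1 P2 : ℝ} (hs : s ∈ Icc 0 P1) (ht : t ∈ Icc 0 P2) :
    F (0, s, 0, t) ≤ F (0, P1, 0, P2) := by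
  rw [twoPowSumRate_only_user2 hg11 hg12 hs.1 ht.1,
    twoPowSumRate_only_user2 hg11 hg12 (hs.1.trans hs.2) (ht.1.trans ht.2)]
  gcongr
  exacts [hs.2, ht.2]

end

noncomputable def corners (P1 P2 : ℝ) : Finset (ℝ × ℝ × ℝ × ℝ) :=
  {(P1, 0, P2, 0), (0, P1, 0, P2), (0, P1, P2, 0), (P1, 0, 0, P2)}

theorem corners_nonempty (P1 P2 : ℝ) : (corners P1 P2).Nonempty := by simp [corners]

theorem feasible_of_mem_corners {P1 P2 Q11 Q21 Q12 Q22 : ℝ} (hP1 : 0 ≤ P1) (hP2 : 0 ≤ P2)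
    (hQ : (Q11, Q21, Q12, Q22) ∈ corners P1 P2) : feasible P1 P2 Q11 Q21 Q12 Q22 := by
  simp only [corners, Finset.mem_insert, Finset.mem_singleton, Prod.mk.injEq] at hQ
  rcases hQ with ⟨rfl, rfl, rfl, rfl⟩ | ⟨rfl, rfl, rfl, rfl⟩ | ⟨rfl, rfl, rfl, rfl⟩ |
    ⟨rfl, rfl, rfl, rfl⟩ <;> simp [feasible, hP1, hP2]

noncomputable def cornerMax (g11 g12 g21 g22 P1 P2 : ℝ) : ℝ :=
  (corners P1 P2).sup' (corners_nonempty P1 P2) (twoPowSumRate g11 g12 g21 g22)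

section

variable {g11 g12 g21 g22 P1 P2 : ℝ}

local notation "F" => twoPowSumRate g11 g12 g21 g22

local notation "W" => cornerMax g11 g12 g21 g22 P1 P2

theorem twoPowSumRate_le_cornerMax_of_mem {q : ℝ × ℝ × ℝ × ℝ} (hq : q ∈ corners P1 P2) :
    F q ≤ W :=
  Finset.le_sup' _ hq

theorem twoPowSumRate_cross_le_cornerMax (hg11 : 0 ≤ g11) (hg12 : 0 ≤ g12) (hg21 : 0 ≤ g21)
    (hg22 : 0 ≤ g22) {s t : ℝ} (hs : s ∈ Icc 0 P1) (ht : t ∈ Icc 0 P2) :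
    F (0, s, t, 0) ≤ W := by
  have hP1 : P1 ∈ Icc 0 P1 := ⟨hs.1.trans hs.2, le_rfl⟩
  refine (twoPowSumRate_le_max_P21 hg11 hg12 hg21 hg22 hs le_rfl ht.1 le_rfl).trans
    (max_le ?_ ?_)
  · exact (twoPowSumRate_only_user1_le hg11 hg12 hg21 hg22 ⟨le_rfl, hP1.1⟩ ht).trans
      (twoPowSumRate_le_cornerMax_of_mem (by simp [corners]))
  · refine (twoPowSumRate_le_max_P12 hg11 hg12 hg21 hg22 ht le_rfl hP1.1 le_rfl).trans
      (max_le ?_ (twoPowSumRate_le_cornerMax_of_mem (by simp [corners])))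
    exact (twoPowSumRate_only_user2_le hg11 hg12 hg21 hg22 hP1 ⟨le_rfl, ht.1.trans ht.2⟩).trans
      (twoPowSumRate_le_cornerMax_of_mem (by simp [corners]))

theorem twoPowSumRate_direct_le_cornerMax (hg11 : 0 ≤ g11) (hg12 : 0 ≤ g12) (hg21 : 0 ≤ g21)
    (hg22 : 0 ≤ g22) {s t : ℝ} (hs : s ∈ Icc 0 P1) (ht : t ∈ Icc 0 P2) :
    F (s, 0, 0, t) ≤ W := by
  have hP1 : P1 ∈ Icc 0 P1 := ⟨hs.1.trans hs.2, le_rfl⟩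
  refine (twoPowSumRate_le_max_P11 hg11 hg12 hg21 hg22 hs le_rfl le_rfl ht.1).trans
    (max_le ?_ ?_)
  · exact (twoPowSumRate_only_user2_le hg11 hg12 hg21 hg22 ⟨le_rfl, hP1.1⟩ ht).trans
      (twoPowSumRate_le_cornerMax_of_mem (by simp [corners]))
  · refine (twoPowSumRate_le_max_P22 hg11 hg12 hg21 hg22 ht hP1.1 le_rfl le_rfl).trans
      (max_le ?_ (twoPowSumRate_le_cornerMax_of_mem (by simp [corners])))
    exact (twoPowSumRate_only_user1_le hg11 hg12 hg21 hg22 hP1 ⟨le_rfl, ht.1.trans ht.2⟩).trans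
      (twoPowSumRate_le_cornerMax_of_mem (by simp [corners]))

theorem twoPowSumRate_le_cornerMax (hg11 : 0 ≤ g11) (hg12 : 0 ≤ g12) (hg21 : 0 ≤ g21)
    (hg22 : 0 ≤ g22) {x1 y1 x2 y2 : ℝ} (hp : feasible P1 P2 x1 y1 x2 y2) :
    F (x1, y1, x2, y2) ≤ W := by
  obtain ⟨hx1, hy1, hx2, hy2, hs, ht⟩ := hp
  have hs : x1 + y1 ∈ Icc 0 P1 := ⟨by positivity, hs⟩
  have ht : x2 + y2 ∈ Icc 0 P2 := ⟨by positivity, ht⟩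
  have hconcentrate :=
    (twoPowSumRate_le_max_concentrate_bts1 hg11 hg12 hg21 hg22 hx1 hy1 hx2 hy2).trans <|
      max_le_max (twoPowSumRate_le_max_concentrate_bts2 hg11 hg12 hg21 hg22 hs.1 le_rfl hx2 hy2)
        (twoPowSumRate_le_max_concentrate_bts2 hg11 hg12 hg21 hg22 le_rfl hs.1 hx2 hy2)
  refine hconcentrate.trans (max_le (max_le ?_ ?_) (max_le ?_ ?_))
  · exact (twoPowSumRate_only_user1_le hg11 hg12 hg21 hg22 hs ht).trans
      (twoPowSumRate_le_cornerMax_of_mem (by simp [corners]))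
  · exact twoPowSumRate_direct_le_cornerMax hg11 hg12 hg21 hg22 hs ht
  · exact twoPowSumRate_cross_le_cornerMax hg11 hg12 hg21 hg22 hs ht
  · exact (twoPowSumRate_only_user2_le hg11 hg12 hg21 hg22 hs ht).trans
      (twoPowSumRate_le_cornerMax_of_mem (by simp [corners]))

end

theorem sum_rate_max_at_corner
    (g11 g12 g21 g22 P1 P2 : ℝ)
    (hg11 : 0 < g11) (hg12 : 0 < g12) (hg21 : 0 < g21) (hg22 : 0 < g22)
    (hP1 : 0 < P1) (hP2 : 0 < P2) :
    ∃ Q11 Q21 Q12 Q22 : ℝ,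
      ((Q11, Q21, Q12, Q22) = (P1, 0, P2, 0) ∨
       (Q11, Q21, Q12, Q22) = (0, P1, 0, P2) ∨
       (Q11, Q21, Q12, Q22) = (0, P1, P2, 0) ∨
       (Q11, Q21, Q12, Q22) = (P1, 0, 0, P2)) ∧
      feasible P1 P2 Q11 Q21 Q12 Q22 ∧
      ∀ P11 P21 P12 P22, feasible P1 P2 P11 P21 P12 P22 →
        rate1 g11 g12 P11 P21 P12 P22 + rate2 g21 g22 P11 P21 P12 P22 ≤
          rate1 g11 g12 Q11 Q21 Q12 Q22 + rate2 g21 g22 Q11 Q21 Q12 Q22 := by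
  obtain ⟨⟨Q11, Q21, Q12, Q22⟩, hQ, hQmax⟩ :=
    Finset.exists_mem_eq_sup' (corners_nonempty P1 P2) (twoPowSumRate g11 g12 g21 g22)
  have hQfeas := feasible_of_mem_corners hP1.le hP2.le hQ
  refine ⟨Q11, Q21, Q12, Q22, by simpa [corners] using hQ, hQfeas, fun P11 P21 P12 P22 hP => ?_⟩
  have hbound := (twoPowSumRate_le_cornerMax hg11.le hg12.le hg21.le hg22.le hP).trans hQmax.le
  obtain ⟨h11, h21, h12, h22, -, -⟩ := hP
  obtain ⟨k11, k21, k12, k22, -, -⟩ := hQfeas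
  rw [rate1_add_rate2 hg11.le hg12.le hg21.le hg22.le h11 h21 h12 h22,
    rate1_add_rate2 hg11.le hg12.le hg21.le hg22.le k11 k21 k12 k22]
  exact Real.logb_le_logb_of_le one_lt_two
    (twoPowSumRate_pos hg11.le hg12.le hg21.le hg22.le h11 h21 h12 h22) hbound
end

section
/- Let g11, g12, g21, g22 > 0, P1, P2 > 0, and let μ ≥ 0 with μ ≠ 1. Then the maximum over all feasible power allocations of the weighted sum rate R1 + μ·R2 is attained by a feasible allocation (P11, P21, P12, P22) satisfying P11·P21 = 0 and P12·P22 = 0. -/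
/-! With the total power `S` of one base station held fixed, splitting it as `(S - x, x)` between
the two users leaves both total received powers constant, so each rate is a constant minus
`logb 2` of an affine function of `x` (noise plus interference). The weighted sum rate is
therefore convex in `x` and is maximised at an endpoint of `[0, S]`, where the station serves a
single user. Doing this for each station in turn, starting from a maximiser on the compact
feasible set, yields a maximiser of the required form. -/

open Real Set

theorem convexOn_neg_logb_affine {b : ℝ} (hb : 1 < b) {s : Set ℝ} (hs : Convex ℝ s)
    {u v : ℝ} (hpos : ∀ x ∈ s, 0 < u + v * x) : ConvexOn ℝ s fun x => -logb b (u + v * x) := by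
  have hlog : ConvexOn ℝ (Ioi 0) fun t => -logb b t := by
    refine (strictConcaveOn_log_Ioi.concaveOn.neg.smul (inv_nonneg.2 (log_pos hb).le)).congr ?_
    intro t _
    simp only [logb, smul_eq_mul, Pi.neg_apply]
    ring
  let g : ℝ →ᵃ[ℝ] ℝ := AffineMap.const ℝ ℝ u + v • AffineMap.id ℝ ℝ
  exact (hlog.comp_affineMap g).subset hpos hs

theorem logb_one_add_div {b n d : ℝ} (hd : 0 < d) (hn : 0 < d + n) :
    logb b (1 + n / d) = logb b (d + n) - logb b d := by
  rw [← logb_div hn.ne' hd.ne', add_div, div_self hd.ne']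

theorem IsCompact.exists_isMaxOn_of_forall_exists_le {α β : Type*} [TopologicalSpace α]
    [LinearOrder β] [TopologicalSpace β] [ClosedIciTopology β] {K : Set α} {f : α → β}
    {Φ : α → Prop} (hK : IsCompact K) (hne : K.Nonempty) (hf : ContinuousOn f K)
    (h : ∀ p ∈ K, ∃ q ∈ K, Φ q ∧ f p ≤ f q) : ∃ q ∈ K, Φ q ∧ IsMaxOn f K q := by
  obtain ⟨p, hpK, hp⟩ := hK.exists_isMaxOn hne hf
  obtain ⟨q, hqK, hΦ, hpq⟩ := h p hpK
  exact ⟨q, hqK, hΦ, fun x hx => (hp hx).trans hpq⟩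

theorem rate2_eq_rate1 (g21 g22 P11 P21 P12 P22 : ℝ) :
    rate2 g21 g22 P11 P21 P12 P22 = rate1 g21 g22 P21 P11 P22 P12 :=
  rfl

theorem rate1_swap (g11 g12 P11 P21 P12 P22 : ℝ) :
    rate1 g11 g12 P11 P21 P12 P22 = rate1 g12 g11 P12 P22 P11 P21 := by
  simp only [rate1, add_comm, add_left_comm]

theorem feasible_swap {P1 P2 P11 P21 P12 P22 : ℝ} :
    feasible P1 P2 P11 P21 P12 P22 ↔ feasible P2 P1 P12 P22 P11 P21 := by
  unfold feasible
  tauto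

section Rate

variable {g11 g12 P11 P21 P12 P22 : ℝ}

theorem rate1_eq_logb_sub (hg11 : 0 ≤ g11) (hg12 : 0 ≤ g12) (h11 : 0 ≤ P11) (h21 : 0 ≤ P21)
    (h12 : 0 ≤ P12) (h22 : 0 ≤ P22) :
    rate1 g11 g12 P11 P21 P12 P22 =
      logb 2 (1 + g11 * (P11 + P21) + g12 * (P12 + P22)) - logb 2 (1 + g11 * P21 + g12 * P22) := by
  rw [rate1, logb_one_add_div (by positivity) (by positivity)]
  ring_nf

theorem ContinuousOn.rate1 {α : Type*} [TopologicalSpace α] {s : Set α} {a b c d : α → ℝ}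
    (ha : ContinuousOn a s) (hb : ContinuousOn b s) (hc : ContinuousOn c s)
    (hd : ContinuousOn d s) (hg11 : 0 ≤ g11) (hg12 : 0 ≤ g12)
    (hnonneg : ∀ x ∈ s, 0 ≤ a x ∧ 0 ≤ b x ∧ 0 ≤ c x ∧ 0 ≤ d x) :
    ContinuousOn (fun x => _root_.rate1 g11 g12 (a x) (b x) (c x) (d x)) s := by
  have hden : ∀ x ∈ s, 1 + g11 * b x + g12 * d x ≠ 0 := fun x hx => by
    obtain ⟨_, _, _, _⟩ := hnonneg x hx
    positivity
  have hsinr : ∀ x ∈ s, 1 + (g11 * a x + g12 * c x) / (1 + g11 * b x + g12 * d x) ≠ 0 :=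
    fun x hx => by
      obtain ⟨_, _, _, _⟩ := hnonneg x hx
      positivity
  unfold _root_.rate1
  fun_prop (disch := assumption)

end Rate

noncomputable def weightedSumRate (g11 g12 g21 g22 μ P11 P21 P12 P22 : ℝ) : ℝ :=
  rate1 g11 g12 P11 P21 P12 P22 + μ * rate2 g21 g22 P11 P21 P12 P22

def feasibleSet (P1 P2 : ℝ) : Set (ℝ × ℝ × ℝ × ℝ) :=
  {p | feasible P1 P2 p.1 p.2.1 p.2.2.1 p.2.2.2}

theorem isCompact_feasibleSet (P1 P2 : ℝ) : IsCompact (feasibleSet P1 P2) := by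
  have hclosed : IsClosed (feasibleSet P1 P2) := by
    simp only [feasibleSet, feasible, ofPred_and]
    apply_rules [IsClosed.inter, isClosed_le] <;> fun_prop
  refine (isCompact_Icc (a := (0, 0, 0, 0)) (b := (P1, P1, P2, P2))).of_isClosed_subset hclosed ?_
  rintro p ⟨h11, h21, h12, h22, hs1, hs2⟩
  simp only [mem_Icc, Prod.le_def]
  exact ⟨⟨h11, h21, h12, h22⟩, by linarith, by linarith, by linarith, by linarith⟩

section WeightedSumRate

variable {g11 g12 g21 g22 μ : ℝ}

theorem weightedSumRate_swap (P11 P21 P12 P22 : ℝ) :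
    weightedSumRate g11 g12 g21 g22 μ P11 P21 P12 P22 =
      weightedSumRate g12 g11 g22 g21 μ P12 P22 P11 P21 := by
  simp only [weightedSumRate, rate2_eq_rate1, rate1_swap g11, rate1_swap g21]

theorem continuousOn_weightedSumRate {P1 P2 : ℝ} (hg11 : 0 ≤ g11) (hg12 : 0 ≤ g12)
    (hg21 : 0 ≤ g21) (hg22 : 0 ≤ g22) :
    ContinuousOn
      (fun p : ℝ × ℝ × ℝ × ℝ => weightedSumRate g11 g12 g21 g22 μ p.1 p.2.1 p.2.2.1 p.2.2.2)
      (feasibleSet P1 P2) := by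
  have hnonneg :
      ∀ p ∈ feasibleSet P1 P2, 0 ≤ p.1 ∧ 0 ≤ p.2.1 ∧ 0 ≤ p.2.2.1 ∧ 0 ≤ p.2.2.2 :=
    fun p ⟨h11, h21, h12, h22, _⟩ => ⟨h11, h21, h12, h22⟩
  simp only [weightedSumRate, rate2_eq_rate1]
  refine .add (.rate1 ?_ ?_ ?_ ?_ hg11 hg12 hnonneg)
    (continuousOn_const.mul (.rate1 ?_ ?_ ?_ ?_ hg21 hg22 fun p hp => ?_))
  all_goals try fun_prop
  obtain ⟨h11, h21, h12, h22⟩ := hnonneg p hp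
  exact ⟨h21, h11, h22, h12⟩

theorem convexOn_weightedSumRate_split {S P12 P22 : ℝ} (hg11 : 0 ≤ g11) (hg12 : 0 ≤ g12)
    (hg21 : 0 ≤ g21) (hg22 : 0 ≤ g22) (hμ : 0 ≤ μ) (h12 : 0 ≤ P12) (h22 : 0 ≤ P22) :
    ConvexOn ℝ (Icc 0 S) fun x => weightedSumRate g11 g12 g21 g22 μ (S - x) x P12 P22 := by
  set C := logb 2 (1 + g11 * S + g12 * (P12 + P22)) + μ * logb 2 (1 + g21 * S + g22 * (P12 + P22))
  have h1 := convexOn_neg_logb_affine one_lt_two (convex_Icc 0 S)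
    (u := 1 + g12 * P22) (v := g11) fun x hx => by have := hx.1; positivity
  have h2 := convexOn_neg_logb_affine one_lt_two (convex_Icc 0 S)
    (u := 1 + g21 * S + g22 * P12) (v := -g21) fun x hx => by
      have : 0 ≤ S - x := sub_nonneg.2 hx.2
      nlinarith
  refine (((convexOn_const C (convex_Icc 0 S)).add h1).add (h2.smul hμ)).congr fun x hx => ?_
  have hSx : 0 ≤ S - x := sub_nonneg.2 hx.2
  simp only [weightedSumRate, rate2_eq_rate1, rate1_eq_logb_sub hg11 hg12 hSx hx.1 h12 h22,
    rate1_eq_logb_sub hg21 hg22 hx.1 hSx h22 h12, C, Pi.add_apply, smul_eq_mul]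
  ring_nf

theorem exists_split_vertex_le {P1 P2 P11 P21 P12 P22 : ℝ} (hg11 : 0 ≤ g11) (hg12 : 0 ≤ g12)
    (hg21 : 0 ≤ g21) (hg22 : 0 ≤ g22) (hμ : 0 ≤ μ) (hf : feasible P1 P2 P11 P21 P12 P22) :
    ∃ Q11 Q21, feasible P1 P2 Q11 Q21 P12 P22 ∧ Q11 * Q21 = 0 ∧
      weightedSumRate g11 g12 g21 g22 μ P11 P21 P12 P22 ≤
        weightedSumRate g11 g12 g21 g22 μ Q11 Q21 P12 P22 := by
  obtain ⟨h11, h21, h12, h22, hs1, hs2⟩ := hf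
  have hS : 0 ≤ P11 + P21 := add_nonneg h11 h21
  have hle := (convexOn_weightedSumRate_split (S := P11 + P21) hg11 hg12 hg21 hg22 hμ h12 h22
    ).le_on_segment (left_mem_Icc.2 hS) (right_mem_Icc.2 hS)
      (by rw [segment_eq_Icc hS]; exact ⟨h21, le_add_of_nonneg_left h11⟩)
  simp only [sub_zero, sub_self, add_sub_cancel_right] at hle
  rcases le_max_iff.1 hle with h | h
  · exact ⟨P11 + P21, 0, ⟨hS, le_rfl, h12, h22, by simpa, hs2⟩, mul_zero _, h⟩
  · exact ⟨0, P11 + P21, ⟨le_rfl, hS, h12, h22, by simpa, hs2⟩, zero_mul _, h⟩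

theorem exists_singleMessage_le {P1 P2 P11 P21 P12 P22 : ℝ} (hg11 : 0 ≤ g11) (hg12 : 0 ≤ g12)
    (hg21 : 0 ≤ g21) (hg22 : 0 ≤ g22) (hμ : 0 ≤ μ) (hf : feasible P1 P2 P11 P21 P12 P22) :
    ∃ Q11 Q21 Q12 Q22, feasible P1 P2 Q11 Q21 Q12 Q22 ∧ Q11 * Q21 = 0 ∧ Q12 * Q22 = 0 ∧
      weightedSumRate g11 g12 g21 g22 μ P11 P21 P12 P22 ≤
        weightedSumRate g11 g12 g21 g22 μ Q11 Q21 Q12 Q22 := by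
  obtain ⟨Q11, Q21, hf1, hQ1, hle1⟩ := exists_split_vertex_le hg11 hg12 hg21 hg22 hμ hf
  obtain ⟨Q12, Q22, hf2, hQ2, hle2⟩ :=
    exists_split_vertex_le hg12 hg11 hg22 hg21 hμ (feasible_swap.1 hf1)
  rw [← weightedSumRate_swap Q11 Q21 P12, ← weightedSumRate_swap Q11 Q21 Q12] at hle2
  exact ⟨Q11, Q21, Q12, Q22, feasible_swap.2 hf2, hQ1, hQ2, hle1.trans hle2⟩

end WeightedSumRate

theorem weighted_sum_rate_max_single_message_general
    (g11 g12 g21 g22 P1 P2 μ : ℝ)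
    (hg11 : 0 < g11) (hg12 : 0 < g12) (hg21 : 0 < g21) (hg22 : 0 < g22)
    (hP1 : 0 < P1) (hP2 : 0 < P2)
    (hμ : 0 ≤ μ) :
    ∃ Q11 Q21 Q12 Q22 : ℝ,
      feasible P1 P2 Q11 Q21 Q12 Q22 ∧
      Q11 * Q21 = 0 ∧ Q12 * Q22 = 0 ∧
      ∀ P11 P21 P12 P22, feasible P1 P2 P11 P21 P12 P22 →
        rate1 g11 g12 P11 P21 P12 P22 + μ * rate2 g21 g22 P11 P21 P12 P22 ≤
          rate1 g11 g12 Q11 Q21 Q12 Q22 + μ * rate2 g21 g22 Q11 Q21 Q12 Q22 := by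
  have hne : (feasibleSet P1 P2).Nonempty :=
    ⟨0, le_rfl, le_rfl, le_rfl, le_rfl, by simpa using hP1.le, by simpa using hP2.le⟩
  obtain ⟨⟨Q11, Q21, Q12, Q22⟩, hQ, ⟨hQ1, hQ2⟩, hmax⟩ :=
    (isCompact_feasibleSet P1 P2).exists_isMaxOn_of_forall_exists_le
      (Φ := fun q => q.1 * q.2.1 = 0 ∧ q.2.2.1 * q.2.2.2 = 0) hne
      (continuousOn_weightedSumRate (μ := μ) hg11.le hg12.le hg21.le hg22.le)
      fun ⟨P11, P21, P12, P22⟩ hP => by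
        obtain ⟨Q11, Q21, Q12, Q22, hQ, hQ1, hQ2, hle⟩ :=
          exists_singleMessage_le hg11.le hg12.le hg21.le hg22.le hμ hP
        exact ⟨(Q11, Q21, Q12, Q22), hQ, ⟨hQ1, hQ2⟩, hle⟩
  exact ⟨Q11, Q21, Q12, Q22, hQ, hQ1, hQ2, fun P11 P21 P12 P22 hP =>
    hmax (a := (P11, P21, P12, P22)) hP⟩

theorem weighted_sum_rate_max_single_message
    (g11 g12 g21 g22 P1 P2 μ : ℝ)
    (hg11 : 0 < g11) (hg12 : 0 < g12) (hg21 : 0 < g21) (hg22 : 0 < g22)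
    (hP1 : 0 < P1) (hP2 : 0 < P2)
    (hμ : 0 ≤ μ) (hμne : μ ≠ 1) :
    ∃ Q11 Q21 Q12 Q22 : ℝ,
      feasible P1 P2 Q11 Q21 Q12 Q22 ∧
      Q11 * Q21 = 0 ∧ Q12 * Q22 = 0 ∧
      ∀ P11 P21 P12 P22, feasible P1 P2 P11 P21 P12 P22 →
        rate1 g11 g12 P11 P21 P12 P22 + μ * rate2 g21 g22 P11 P21 P12 P22 ≤
          rate1 g11 g12 Q11 Q21 Q12 Q22 + μ * rate2 g21 g22 Q11 Q21 Q12 Q22 :=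
  weighted_sum_rate_max_single_message_general g11 g12 g21 g22 P1 P2 μ hg11 hg12 hg21 hg22 hP1 hP2
    hμ
end

section
/- Let g11, g12, g21, g22 > 0, P1, P2 > 0 and μ ≥ 0. Define f(P11) = log2(1 + g11·P11/(1 + g12·P2)) + μ·log2(1 + g22·P2/(1 + g21·P11)) for P11 ≥ 0. Then every stationary point of f (i.e., every P11 ≥ 0 with f'(P11) = 0) satisfies the quadratic equation a1·P11² + b1·P11 + c1 = 0, where a1 = g11·g21², b1 = 2·g11·g21 + (1 − μ)·g11·g21·g22·P2, and c1 = g11·(1 + g22·P2) − μ·g21·g22·P2·(1 + g12·P2). -/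
/-! Both rates are base-2 logarithms of rational functions of `P11`, so `f'` is an explicit rational
function; clearing its denominators, all positive for `P11 ≥ 0`, turns `f'(P11) = 0` into the
quadratic. -/

open Real

theorem HasDerivAt.logb {f : ℝ → ℝ} {f' x : ℝ} (b : ℝ) (hf : HasDerivAt f f' x) (hx : f x ≠ 0) :
    HasDerivAt (fun y => Real.logb b (f y)) (f' / (f x * Real.log b)) x := by
  simpa only [Real.logb, div_div] using (hf.log hx).div_const (Real.log b)

theorem hasDerivAt_logb_one_add_mul_div (b a d x : ℝ) (hd : d ≠ 0) (hx : d + a * x ≠ 0) :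
    HasDerivAt (fun y => logb b (1 + a * y / d)) (a / ((d + a * x) * log b)) x := by
  have hlin : HasDerivAt (fun y => 1 + a * y / d) (a / d) x := by
    simpa using ((hasDerivAt_id x).const_mul a |>.div_const d).const_add 1
  convert hlin.logb b (by rw [one_add_div hd]; exact div_ne_zero hx hd) using 1
  field_simp

theorem hasDerivAt_logb_one_add_div_one_add_mul (b c s x : ℝ) (hx : 1 + c * x ≠ 0)
    (hs : 1 + c * x + s ≠ 0) :
    HasDerivAt (fun y => logb b (1 + s / (1 + c * y)))
      (-(c * s) / ((1 + c * x) * (1 + c * x + s) * log b)) x := by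
  have hden : HasDerivAt (fun y => 1 + c * y) c x := by
    simpa using ((hasDerivAt_id x).const_mul c).const_add 1
  have hfrac := ((hasDerivAt_const x s).fun_div hden hx).const_add 1
  convert hfrac.logb b (by rw [one_add_div hx]; exact div_ne_zero hs hx) using 1
  field_simp
  ring

theorem stationary_point_satisfies_quadratic_general
    (g11 g12 g21 g22 P2 μ : ℝ)
    (hg11 : 0 < g11) (hg12 : 0 < g12) (hg21 : 0 < g21) (hg22 : 0 < g22)
    (hP2 : 0 < P2)
    (f : ℝ → ℝ)
    (hf : f = fun P11 => Real.logb 2 (1 + g11 * P11 / (1 + g12 * P2)) +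
      μ * Real.logb 2 (1 + g22 * P2 / (1 + g21 * P11)))
    (P11 : ℝ) (hP11 : 0 ≤ P11) (hstat : deriv f P11 = 0) :
    g11 * g21 ^ 2 * P11 ^ 2 +
      (2 * g11 * g21 + (1 - μ) * g11 * g21 * g22 * P2) * P11 +
      (g11 * (1 + g22 * P2) - μ * g21 * g22 * P2 * (1 + g12 * P2)) = 0 := by
  have hsignal := hasDerivAt_logb_one_add_mul_div 2 g11 (1 + g12 * P2) P11
    (by positivity) (by positivity)
  have hinterference := hasDerivAt_logb_one_add_div_one_add_mul 2 g21 (g22 * P2) P11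
    (by positivity) (by positivity)
  rw [hf, (hsignal.fun_add (hinterference.const_mul μ)).deriv] at hstat
  field_simp at hstat
  linear_combination hstat

theorem stationary_point_satisfies_quadratic
    (g11 g12 g21 g22 P1 P2 μ : ℝ)
    (hg11 : 0 < g11) (hg12 : 0 < g12) (hg21 : 0 < g21) (hg22 : 0 < g22)
    (hP1 : 0 < P1) (hP2 : 0 < P2) (hμ : 0 ≤ μ)
    (f : ℝ → ℝ)
    (hf : f = fun P11 => Real.logb 2 (1 + g11 * P11 / (1 + g12 * P2)) +
      μ * Real.logb 2 (1 + g22 * P2 / (1 + g21 * P11)))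
    (P11 : ℝ) (hP11 : 0 ≤ P11) (hstat : deriv f P11 = 0) :
    g11 * g21 ^ 2 * P11 ^ 2 +
      (2 * g11 * g21 + (1 - μ) * g11 * g21 * g22 * P2) * P11 +
      (g11 * (1 + g22 * P2) - μ * g21 * g22 * P2 * (1 + g12 * P2)) = 0 :=
  stationary_point_satisfies_quadratic_general g11 g12 g21 g22 P2 μ hg11 hg12 hg21 hg22 hP2 f hf P11
    hP11 hstat
end

section
/- Let g11, g12, g21, g22 > 0 and P1, P2 > 0, and set μ = 1. Then the function f(P11) = log2(1 + g11·P11/(1 + g12·P2)) + log2(1 + g22·P2/(1 + g21·P11)) attains its maximum over the interval [0, P1] at an endpoint, i.e., at P11 = 0 or P11 = P1. -/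
/-!
Writing `A = 1 + g12 P2`, `a = g11 / A`, `b = g21`, `c = g22 P2`, the sum rate is
`log2 ((1 + a x) (1 + c / (1 + b x)))`, and the product splits as
`const + a x + c (b - a) / b / (1 + b x)`. If `a ≤ b` the last term is convex, so the product is
convex and peaks at an endpoint; if `a ≥ b` it is increasing, so the product is increasing and
peaks at `P1`. Taking `log2` preserves this.
-/

open Set

lemma convexOn_div_one_add_mul {k b : ℝ} (hk : 0 ≤ k) (hb : 0 ≤ b) :
    ConvexOn ℝ (Ici 0) fun x => k / (1 + b * x) := by
  have hinv : ConvexOn ℝ (Ioi 0) fun x : ℝ => x⁻¹ := by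
    simpa using convexOn_zpow (𝕜 := ℝ) (-1)
  have hcomp := (hinv.translate_right 1).comp_linearMap (b • LinearMap.id)
  have hsub : Ici (0 : ℝ) ⊆ (b • LinearMap.id : ℝ →ₗ[ℝ] ℝ) ⁻¹' ((1 + ·) ⁻¹' Ioi 0) := by
    intro x (hx : 0 ≤ x)
    simp only [mem_preimage, LinearMap.smul_apply, LinearMap.id_apply, smul_eq_mul, mem_Ioi]
    positivity
  simpa [div_eq_mul_inv, Function.comp_def] using (hcomp.subset hsub (convex_Ici 0)).smul hk

lemma monotoneOn_div_one_add_mul {k b : ℝ} (hk : k ≤ 0) (hb : 0 ≤ b) :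
    MonotoneOn (fun x => k / (1 + b * x)) (Ici 0) := by
  intro x (hx : 0 ≤ x) y _ hxy
  have hdx : 0 < 1 + b * x := by positivity
  have hdxy : 1 + b * x ≤ 1 + b * y := by gcongr
  rw [div_le_div_iff₀ hdx (hdx.trans_le hdxy)]
  nlinarith

lemma mul_add_div_one_add_mul_le_max {a k b P y : ℝ} (ha : 0 ≤ a) (hb : 0 ≤ b)
    (hy : y ∈ Icc 0 P) :
    a * y + k / (1 + b * y) ≤ max (a * 0 + k / (1 + b * 0)) (a * P + k / (1 + b * P)) := by
  rcases le_total 0 k with hk | hk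
  · have hlin : ConvexOn ℝ (Ici 0) fun x : ℝ => a * x :=
      (LinearMap.mulLeft ℝ a).convexOn (convex_Ici 0)
    exact (hlin.add (convexOn_div_one_add_mul hk hb)).le_max_of_mem_Icc
      self_mem_Ici (hy.1.trans hy.2) hy
  · have hmono : MonotoneOn (fun x => a * x + k / (1 + b * x)) (Ici 0) :=
      (monotone_id.const_mul ha).monotoneOn _ |>.add (monotoneOn_div_one_add_mul hk hb)
    exact le_max_of_le_right (hmono hy.1 (hy.1.trans hy.2) hy.2)

lemma one_add_mul_mul_one_add_div_eq {a b c x : ℝ} (hb : b ≠ 0) (hx : 1 + b * x ≠ 0) :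
    (1 + a * x) * (1 + c / (1 + b * x)) =
      1 + c * a / b + (a * x + c * (b - a) / b / (1 + b * x)) := by
  rw [eq_comm, ← sub_eq_zero]
  field_simp
  ring

lemma one_add_mul_mul_one_add_div_le_max {a b c P y : ℝ} (ha : 0 ≤ a) (hb : 0 < b)
    (hy : y ∈ Icc 0 P) :
    (1 + a * y) * (1 + c / (1 + b * y)) ≤
      max ((1 + a * 0) * (1 + c / (1 + b * 0))) ((1 + a * P) * (1 + c / (1 + b * P))) := by
  have hpos : ∀ x : ℝ, 0 ≤ x → 1 + b * x ≠ 0 := fun x hx => by positivity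
  rw [one_add_mul_mul_one_add_div_eq hb.ne' (hpos y hy.1),
    one_add_mul_mul_one_add_div_eq hb.ne' (hpos 0 le_rfl),
    one_add_mul_mul_one_add_div_eq hb.ne' (hpos P (hy.1.trans hy.2)), max_add_add_left]
  gcongr
  exact mul_add_div_one_add_mul_le_max ha hb.le hy

lemma exists_endpoint_forall_le {f : ℝ → ℝ} {a b : ℝ}
    (h : ∀ y ∈ Icc a b, f y ≤ max (f a) (f b)) :
    ∃ x, (x = a ∨ x = b) ∧ ∀ y ∈ Icc a b, f y ≤ f x := by
  rcases le_total (f a) (f b) with hab | hab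
  · exact ⟨b, Or.inr rfl, fun y hy => (h y hy).trans (max_eq_right hab).le⟩
  · exact ⟨a, Or.inl rfl, fun y hy => (h y hy).trans (max_eq_left hab).le⟩

theorem sum_rate_single_message_max_at_endpoint_general
    (g11 g12 g21 g22 P1 P2 : ℝ)
    (hg11 : 0 < g11) (hg12 : 0 < g12) (hg21 : 0 < g21) (hg22 : 0 < g22)
    (hP2 : 0 < P2)
    (f : ℝ → ℝ)
    (hf : f = fun P11 => Real.logb 2 (1 + g11 * P11 / (1 + g12 * P2)) +
      Real.logb 2 (1 + g22 * P2 / (1 + g21 * P11))) :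
    ∃ x, (x = 0 ∨ x = P1) ∧ ∀ y ∈ Set.Icc (0 : ℝ) P1, f y ≤ f x := by
  set a := g11 / (1 + g12 * P2)
  set c := g22 * P2
  let R : ℝ → ℝ := fun x => (1 + a * x) * (1 + c / (1 + g21 * x))
  have hR_pos : ∀ x : ℝ, 0 ≤ x → 0 < R x := fun x hx => by positivity
  have hf_eq : ∀ x : ℝ, 0 ≤ x → f x = Real.logb 2 (R x) := fun x hx => by
    simp only [hf, R]
    rw [← Real.logb_mul (by positivity) (by positivity), mul_div_right_comm]
  refine exists_endpoint_forall_le fun y hy => ?_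
  have hP1 : 0 ≤ P1 := hy.1.trans hy.2
  rw [hf_eq y hy.1, hf_eq 0 le_rfl, hf_eq P1 hP1]
  have hR := one_add_mul_mul_one_add_div_le_max (a := a) (c := c) (by positivity) hg21 hy
  rcases le_max_iff.1 hR with h | h
  · exact le_max_of_le_left (Real.logb_le_logb_of_le one_lt_two (hR_pos y hy.1) h)
  · exact le_max_of_le_right (Real.logb_le_logb_of_le one_lt_two (hR_pos y hy.1) h)

theorem sum_rate_single_message_max_at_endpoint
    (g11 g12 g21 g22 P1 P2 : ℝ)
    (hg11 : 0 < g11) (hg12 : 0 < g12) (hg21 : 0 < g21) (hg22 : 0 < g22)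
    (hP1 : 0 < P1) (hP2 : 0 < P2)
    (f : ℝ → ℝ)
    (hf : f = fun P11 => Real.logb 2 (1 + g11 * P11 / (1 + g12 * P2)) +
      Real.logb 2 (1 + g22 * P2 / (1 + g21 * P11))) :
    ∃ x, (x = 0 ∨ x = P1) ∧ ∀ y ∈ Set.Icc (0 : ℝ) P1, f y ≤ f x :=
  sum_rate_single_message_max_at_endpoint_general g11 g12 g21 g22 P1 P2 hg11 hg12 hg21 hg22 hP2 f hf
end

section
/- Let α ∈ (0, π/2). Then the function h(β) = cos²(β − α)/cos²(β) is strictly increasing on the interval [0, π/2). -/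
/-! Dividing out `cos β` gives `cos (β - α) / cos β = cos α + sin α * tan β`, so the ratio is the
square of an affine function of `tan β` with positive slope `sin α`. On `[0, π/2)` that affine
function is positive and increasing, hence so is its square. -/

open Real Set

lemma Real.cos_sub_div_cos (α β : ℝ) (hβ : cos β ≠ 0) :
    cos (β - α) / cos β = cos α + sin α * tan β := by
  rw [cos_sub, tan_eq_sin_div_cos]
  field_simp

lemma Real.strictMonoOn_const_add_mul_tan {a b : ℝ} (hb : 0 < b) :
    StrictMonoOn (fun β => a + b * tan β) (Ioo (-(π / 2)) (π / 2)) := by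
  intro x hx y hy hxy
  have := strictMonoOn_tan hx hy hxy
  dsimp only
  gcongr

theorem signal_to_interference_ratio_strictMono
    (α : ℝ) (hα : α ∈ Set.Ioo 0 (Real.pi / 2)) :
    StrictMonoOn (fun β => Real.cos (β - α) ^ 2 / Real.cos β ^ 2)
      (Set.Ico 0 (Real.pi / 2)) := by
  obtain ⟨hα₀, hα₁⟩ := hα
  have hcos : 0 < cos α := cos_pos_of_mem_Ioo ⟨by linarith [pi_pos], hα₁⟩
  have hsin : 0 < sin α := sin_pos_of_pos_of_lt_pi hα₀ (by linarith)
  have hIco : Ico 0 (π / 2) ⊆ Ioo (-(π / 2)) (π / 2) :=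
    Ico_subset_Ioo_left (by linarith [pi_pos])
  have hratio : EqOn (fun β => cos (β - α) ^ 2 / cos β ^ 2)
      (fun β => (cos α + sin α * tan β) ^ 2) (Ico 0 (π / 2)) := fun β hβ => by
    dsimp only
    rw [← div_pow, cos_sub_div_cos α β (cos_pos_of_mem_Ioo (hIco hβ)).ne']
  have hnonneg : MapsTo (fun β => cos α + sin α * tan β) (Ico 0 (π / 2)) {x | 0 ≤ x} :=
    fun β ⟨hβ₀, hβ₁⟩ => by
      have := tan_nonneg_of_nonneg_of_le_pi_div_two hβ₀ hβ₁.le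
      show 0 ≤ cos α + sin α * tan β
      positivity
  refine StrictMonoOn.congr ?_ hratio.symm
  exact (pow_left_strictMonoOn₀ two_ne_zero).comp
    ((strictMonoOn_const_add_mul_tan hsin).mono hIco) hnonneg
end

section
/- Let H be a complex inner product space, let h1, h2 ∈ H be nonzero with g1 = ‖h1‖², g2 = ‖h2‖², and let u = h1/‖h1‖, w = h2/‖h2‖ satisfy 0 < |⟨w, u⟩| < 1. Set α = arccos|⟨w, u⟩| ∈ (0, π/2). For β ∈ [0, π/2], define v = (cos β / cos α)·⟨w, u⟩·w + (sin β / sin α)·(u − ⟨w, u⟩·w). Then |⟨h1, v⟩|² = g1·cos²(β − α) and |⟨h2, v⟩|² = g2·cos²(β). -/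
/-!
Write `c = ⟪w, u⟫` and `P` for the projection onto `ℂ w`, so that `v = (cos β / cos α) P u +
(sin β / sin α) (u - P u)`. Since `u - P u ⟂ w`, `⟪w, v⟫ = (cos β / cos α) c`, and since
`‖P u‖² = |c|² = cos² α`, `‖u - P u‖² = sin² α`, the addition formula gives
`⟪u, v⟫ = cos β cos α + sin β sin α = cos (β - α)`. Both gains follow from `h₁ = ‖h₁‖ u`,
`h₂ = ‖h₂‖ w`.
-/

open scoped InnerProductSpace

section Beam

variable {𝕜 E : Type*} [RCLike 𝕜] [NormedAddCommGroup E] [InnerProductSpace 𝕜 E]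

/-- `a • P u + b • (u - P u)`, where `P` is the orthogonal projection onto `𝕜 ∙ w`
when `‖w‖ = 1`. -/
def beamVector (u w : E) (a b : ℝ) : E :=
  (a : 𝕜) • (⟪w, u⟫_𝕜 • w) + (b : 𝕜) • (u - ⟪w, u⟫_𝕜 • w)

theorem inner_beamVector_eq_mul_inner {u w : E} (hw : ‖w‖ = 1) (a b : ℝ) :
    ⟪w, beamVector (𝕜 := 𝕜) u w a b⟫_𝕜 = a * ⟪w, u⟫_𝕜 := by
  simp only [beamVector, inner_add_right, inner_smul_right, inner_sub_right,
    inner_self_eq_one_of_norm_eq_one hw]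
  ring

theorem inner_beamVector_eq_ofReal {u w : E} (hu : ‖u‖ = 1) (a b : ℝ) :
    ⟪u, beamVector (𝕜 := 𝕜) u w a b⟫_𝕜 =
      ((a * ‖⟪w, u⟫_𝕜‖ ^ 2 + b * (1 - ‖⟪w, u⟫_𝕜‖ ^ 2) : ℝ) : 𝕜) := by
  have hconj : ⟪w, u⟫_𝕜 * ⟪u, w⟫_𝕜 = ((‖⟪w, u⟫_𝕜‖ ^ 2 : ℝ) : 𝕜) := by
    rw [← inner_conj_symm u w, RCLike.mul_conj]
    push_cast
    rfl
  simp only [beamVector, inner_add_right, inner_smul_right, inner_sub_right,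
    inner_self_eq_one_of_norm_eq_one hu]
  push_cast at hconj ⊢
  linear_combination ((a : 𝕜) - b) * hconj

end Beam

theorem norm_inner_eq_norm_mul_norm_inner_inv_norm_smul {E : Type*} [NormedAddCommGroup E]
    [InnerProductSpace ℂ E] (h v : E) : ‖⟪h, v⟫_ℂ‖ = ‖h‖ * ‖⟪‖h‖⁻¹ • h, v⟫_ℂ‖ := by
  rcases eq_or_ne h 0 with rfl | hh
  · simp
  · rw [← Complex.coe_smul, inner_smul_left, Complex.conj_ofReal, norm_mul, Complex.norm_real,
      norm_inv, norm_norm, mul_inv_cancel_left₀ (norm_ne_zero_iff.mpr hh)]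

theorem Real.cos_div_mul_cos_sq_add_sin_div_mul_sin_sq (α β : ℝ) :
    Real.cos β / Real.cos α * Real.cos α ^ 2 + Real.sin β / Real.sin α * Real.sin α ^ 2 =
      Real.cos (β - α) := by
  have div_mul_sq (a b : ℝ) : a / b * b ^ 2 = a * b := by
    rcases eq_or_ne b 0 with rfl | hb
    · simp
    · field_simp
  rw [div_mul_sq, div_mul_sq, Real.cos_sub]

theorem beamforming_vector_channel_gains_general
    {H : Type*} [NormedAddCommGroup H] [InnerProductSpace ℂ H]
    (h1 h2 : H) (hh1 : h1 ≠ 0) (hh2 : h2 ≠ 0)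
    (g1 g2 : ℝ) (hg1 : g1 = ‖h1‖ ^ 2) (hg2 : g2 = ‖h2‖ ^ 2)
    (u w : H) (hu : u = ‖h1‖⁻¹ • h1) (hw : w = ‖h2‖⁻¹ • h2)
    (c : ℂ) (hc : c = ⟪w, u⟫_ℂ)
    (hc0 : 0 < ‖c‖) (hc1 : ‖c‖ < 1)
    (α : ℝ) (hα : α = Real.arccos ‖c‖)
    (β : ℝ)
    (v : H)
    (hv : v = ((Real.cos β / Real.cos α : ℝ) : ℂ) • (c • w) +
      ((Real.sin β / Real.sin α : ℝ) : ℂ) • (u - c • w)) :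
    ‖⟪h1, v⟫_ℂ‖ ^ 2 = g1 * Real.cos (β - α) ^ 2 ∧
    ‖⟪h2, v⟫_ℂ‖ ^ 2 = g2 * Real.cos β ^ 2 := by
  have hu1 : ‖u‖ = 1 := hu ▸ norm_smul_inv_norm hh1
  have hw1 : ‖w‖ = 1 := hw ▸ norm_smul_inv_norm hh2
  have hcos : Real.cos α = ‖c‖ := hα ▸ Real.cos_arccos (by linarith) hc1.le
  have hv' :
      v = beamVector (𝕜 := ℂ) u w (Real.cos β / Real.cos α) (Real.sin β / Real.sin α) := by
    rw [hv, hc]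
    rfl
  constructor
  · rw [hg1, norm_inner_eq_norm_mul_norm_inner_inv_norm_smul, ← hu, mul_pow, hv',
      inner_beamVector_eq_ofReal hu1, ← hc, ← hcos, ← Real.sin_sq,
      Real.cos_div_mul_cos_sq_add_sin_div_mul_sin_sq, RCLike.norm_ofReal, sq_abs]
  · rw [hg2, norm_inner_eq_norm_mul_norm_inner_inv_norm_smul, ← hw, mul_pow, hv',
      inner_beamVector_eq_mul_inner hw1, ← hc, norm_mul, RCLike.norm_ofReal, mul_pow, sq_abs,
      hcos, div_pow, div_mul_cancel₀ _ (pow_ne_zero 2 hc0.ne')]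

theorem beamforming_vector_channel_gains
    {H : Type*} [NormedAddCommGroup H] [InnerProductSpace ℂ H]
    (h1 h2 : H) (hh1 : h1 ≠ 0) (hh2 : h2 ≠ 0)
    (g1 g2 : ℝ) (hg1 : g1 = ‖h1‖ ^ 2) (hg2 : g2 = ‖h2‖ ^ 2)
    (u w : H) (hu : u = ‖h1‖⁻¹ • h1) (hw : w = ‖h2‖⁻¹ • h2)
    (c : ℂ) (hc : c = ⟪w, u⟫_ℂ)
    (hc0 : 0 < ‖c‖) (hc1 : ‖c‖ < 1)
    (α : ℝ) (hα : α = Real.arccos ‖c‖)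
    (β : ℝ) (hβ : β ∈ Set.Icc 0 (Real.pi / 2))
    (v : H)
    (hv : v = ((Real.cos β / Real.cos α : ℝ) : ℂ) • (c • w) +
      ((Real.sin β / Real.sin α : ℝ) : ℂ) • (u - c • w)) :
    ‖⟪h1, v⟫_ℂ‖ ^ 2 = g1 * Real.cos (β - α) ^ 2 ∧
    ‖⟪h2, v⟫_ℂ‖ ^ 2 = g2 * Real.cos β ^ 2 :=
  beamforming_vector_channel_gains_general h1 h2 hh1 hh2 g1 g2 hg1 hg2 u w hu hw c hc hc0 hc1 α hα β
    v hv
end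

section
/- Let g11, g12, g21, g22 > 0, P1, P2 > 0 and R1 ≥ 0. Suppose (P11, P21, P12, P22) is a feasible power allocation whose user-1 rate equals R1. Define Z = 1/(1 + g21·P11 + g22·P12) and P̃_{jk} = Z·P_{jk} for j, k = 1, 2. Then (P̃_{11}, P̃_{21}, P̃_{12}, P̃_{22}, Z) satisfies: Z > 0; g11·P̃11 + g12·P̃12 − (2^{R1} − 1)·(g11·P̃21 + g12·P̃22 + Z) = 0; P̃_{1k} + P̃_{2k} − P_k·Z ≤ 0 for k = 1, 2; g21·P̃11 + g22·P̃12 + Z = 1; and the linear objective g21·P̃21 + g22·P̃22 equals 2^{R2} − 1, where R2 is the user-2 rate of the original allocation. -/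
/-! Charnes–Cooper: multiplying everything by `Z`, the reciprocal of user 2's
interference-plus-noise, normalises that denominator to `1`. Each rate constraint
`2 ^ R - 1 = S / D` then becomes linear in the scaled powers and `Z`, and the budgets,
being homogeneous, survive the scaling because `Z > 0`. -/

open Real

theorem two_rpow_logb_one_add_div {a d : ℝ} (ha : 0 ≤ a) (hd : 0 < d) :
    (2 : ℝ) ^ logb 2 (1 + a / d) = 1 + a / d :=
  rpow_logb two_pos (by norm_num) (by positivity)

theorem linear_fractional_to_linear_program_general
    (g11 g12 g21 g22 P1 P2 R1 : ℝ)
    (hg11 : 0 < g11) (hg12 : 0 < g12) (hg21 : 0 < g21) (hg22 : 0 < g22)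
    (P11 P21 P12 P22 : ℝ)
    (hfeas : feasible P1 P2 P11 P21 P12 P22)
    (hrate : rate1 g11 g12 P11 P21 P12 P22 = R1)
    (Z : ℝ) (hZ : Z = 1 / (1 + g21 * P11 + g22 * P12)) :
    0 < Z ∧
    g11 * (Z * P11) + g12 * (Z * P12) -
      ((2 : ℝ) ^ R1 - 1) * (g11 * (Z * P21) + g12 * (Z * P22) + Z) = 0 ∧
    (Z * P11) + (Z * P21) - P1 * Z ≤ 0 ∧
    (Z * P12) + (Z * P22) - P2 * Z ≤ 0 ∧
    g21 * (Z * P11) + g22 * (Z * P12) + Z = 1 ∧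
    g21 * (Z * P21) + g22 * (Z * P22) =
      (2 : ℝ) ^ (rate2 g21 g22 P11 P21 P12 P22) - 1 := by
  obtain ⟨h11, h21, h12, h22, hb1, hb2⟩ := hfeas
  have hD1 : 0 < 1 + g11 * P21 + g12 * P22 := by positivity
  have hD2 : 0 < 1 + g21 * P11 + g22 * P12 := by positivity
  have hZpos : 0 < Z := hZ ▸ one_div_pos.mpr hD2
  have hZD : Z * (1 + g21 * P11 + g22 * P12) = 1 := by rw [hZ, one_div_mul_cancel hD2.ne']
  have hSINR1 : (2 : ℝ) ^ R1 - 1 = (g11 * P11 + g12 * P12) / (1 + g11 * P21 + g12 * P22) := by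
    rw [← hrate, rate1, two_rpow_logb_one_add_div (by positivity) hD1, add_sub_cancel_left]
  have hSINR2 : (2 : ℝ) ^ rate2 g21 g22 P11 P21 P12 P22 - 1 =
      (g21 * P21 + g22 * P22) / (1 + g21 * P11 + g22 * P12) := by
    rw [rate2, two_rpow_logb_one_add_div (by positivity) hD2, add_sub_cancel_left]
  refine ⟨hZpos, ?_, ?_, ?_, by linear_combination hZD, ?_⟩
  · rw [hSINR1]
    field_simp
    ring
  · linear_combination mul_le_mul_of_nonneg_left hb1 hZpos.le
  · linear_combination mul_le_mul_of_nonneg_left hb2 hZpos.le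
  · rw [hSINR2, hZ]
    ring

theorem linear_fractional_to_linear_program
    (g11 g12 g21 g22 P1 P2 R1 : ℝ)
    (hg11 : 0 < g11) (hg12 : 0 < g12) (hg21 : 0 < g21) (hg22 : 0 < g22)
    (hP1 : 0 < P1) (hP2 : 0 < P2) (hR1 : 0 ≤ R1)
    (P11 P21 P12 P22 : ℝ)
    (hfeas : feasible P1 P2 P11 P21 P12 P22)
    (hrate : rate1 g11 g12 P11 P21 P12 P22 = R1)
    (Z : ℝ) (hZ : Z = 1 / (1 + g21 * P11 + g22 * P12)) :
    0 < Z ∧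
    g11 * (Z * P11) + g12 * (Z * P12) -
      ((2 : ℝ) ^ R1 - 1) * (g11 * (Z * P21) + g12 * (Z * P22) + Z) = 0 ∧
    (Z * P11) + (Z * P21) - P1 * Z ≤ 0 ∧
    (Z * P12) + (Z * P22) - P2 * Z ≤ 0 ∧
    g21 * (Z * P11) + g22 * (Z * P12) + Z = 1 ∧
    g21 * (Z * P21) + g22 * (Z * P22) =
      (2 : ℝ) ^ (rate2 g21 g22 P11 P21 P12 P22) - 1 :=
  linear_fractional_to_linear_program_general g11 g12 g21 g22 P1 P2 R1 hg11 hg12 hg21 hg22 P11 P21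
    P12 P22 hfeas hrate Z hZ
end
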